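/- arXiv:2007.08570 — 2 statements merged into one kernel-verified Lean document; each statement's English description precedes it below -/
import Mathlib

section
/- Let Λ(ρ_A) = Tr_B[U(ρ_A ⊗ I_B/d_B)U†] be the reduced dynamics on A. Then the bipartite OTOC satisfies G_U = 1 − (1/d_A²) Tr[S_{AA'} (Λ ⊗ Λ)(S_{AA'})], where S_{AA'} is the swap on ℂ^{d_A} ⊗ ℂ^{d_A}. -/
/-!
Write `R` for the realignment of `U`, `R_{(a,c),(b,d)} = U_{(a,b),(c,d)}`. Conjugation by `S_{AA'}`
only reindexes `U ⊗ U`, and expanding the trace gives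
`Tr[S_{AA'} U^{⊗2} S_{AA'} U^{†⊗2}] = Tr[(R R†)²]`. On the other side,
`S = Σ_{e,f} E_{ef} ⊗ E_{fe}` and `Tr[S (X ⊗ Y)] = Tr[X Y]` give
`Tr[S (Λ ⊗ Λ)(S)] = Σ_{e,f} Tr[Λ(E_{ef}) Λ(E_{fe})]`, while `Λ(E_{ef})` is the `(e,f)` block of
`R R† / d_B`; summing the products of blocks gives `Tr[(R R†)²] / d_B²`.
-/

open Matrix Kronecker BigOperators

noncomputable section

/-- The swap `S_{AA'}` of the two `A` factors in `(H_A ⊗ H_B)^{⊗2}`. -/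
def SAA (dA dB : ℕ) :
    Matrix ((Fin dA × Fin dB) × (Fin dA × Fin dB)) ((Fin dA × Fin dB) × (Fin dA × Fin dB)) ℂ :=
  Matrix.of fun p q =>
    if p.1.1 = q.2.1 ∧ p.2.1 = q.1.1 ∧ p.1.2 = q.1.2 ∧ p.2.2 = q.2.2 then 1 else 0

/-- The bipartite OTOC `G_U = 1 − (1/d²) Tr(S_{AA'} U^{⊗2} S_{AA'} U^{†⊗2})`. -/
def Greal (dA dB : ℕ) (U : Matrix (Fin dA × Fin dB) (Fin dA × Fin dB) ℂ) : ℝ :=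
  1 - (1 / ((dA * dB : ℝ))^2) *
    (Matrix.trace (SAA dA dB * (U ⊗ₖ U) * SAA dA dB * (Uᴴ ⊗ₖ Uᴴ))).re

/-- The swap operator on `ℂ^{d_A} ⊗ ℂ^{d_A}`. -/
def swapOp (d : ℕ) : Matrix (Fin d × Fin d) (Fin d × Fin d) ℂ :=
  Matrix.of fun p q => if p.1 = q.2 ∧ p.2 = q.1 then 1 else 0

/-- The reduced dynamics `Λ(ρ_A) = Tr_B[U (ρ_A ⊗ I_B/d_B) U†]` on `A`. -/
def redDyn (dA dB : ℕ) (U : Matrix (Fin dA × Fin dB) (Fin dA × Fin dB) ℂ)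
    (ρ : Matrix (Fin dA) (Fin dA) ℂ) : Matrix (Fin dA) (Fin dA) ℂ :=
  Matrix.of fun a c => ∑ b : Fin dB,
    (U * (ρ ⊗ₖ (((dB : ℂ))⁻¹ • (1 : Matrix (Fin dB) (Fin dB) ℂ))) * Uᴴ) (a, b) (c, b)

/-- The tensor product `Φ ⊗ Ψ` of two linear maps on `d_A × d_A` matrices, acting on
operators over `ℂ^{d_A} ⊗ ℂ^{d_A}`. -/
def tensorOp (dA : ℕ)
    (Φ Ψ : Matrix (Fin dA) (Fin dA) ℂ → Matrix (Fin dA) (Fin dA) ℂ)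
    (M : Matrix (Fin dA × Fin dA) (Fin dA × Fin dA) ℂ) :
    Matrix (Fin dA × Fin dA) (Fin dA × Fin dA) ℂ :=
  Matrix.of fun p q => ∑ e : Fin dA, ∑ f : Fin dA, ∑ e' : Fin dA, ∑ f' : Fin dA,
    Φ (Matrix.single e f 1) p.1 q.1 * Ψ (Matrix.single e' f' 1) p.2 q.2 *
      M (e, e') (f, f')

section Realignment

variable {α β γ δ R : Type*}

def realign (U : Matrix (α × β) (γ × δ) R) : Matrix (α × γ) (β × δ) R :=
  of fun p q => U (p.1, q.1) (p.2, q.2)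

def swapFst (p : (α × β) × (α × β)) : (α × β) × (α × β) :=
  ((p.2.1, p.1.2), (p.1.1, p.2.2))

variable [Fintype α] [Fintype β] [Fintype γ] [Fintype δ] [CommSemiring R] [Star R]

theorem trace_kronecker_submatrix_swapFst_mul (U : Matrix (α × β) (γ × δ) R) :
    trace ((U ⊗ₖ U).submatrix swapFst swapFst * (Uᴴ ⊗ₖ Uᴴ)) =
      trace (realign U * (realign U)ᴴ * (realign U * (realign U)ᴴ)) := by
  simp only [trace, diag, mul_apply, submatrix_apply, kroneckerMap_apply, conjTranspose_apply,
    realign, of_apply, swapFst, Finset.sum_mul, Finset.mul_sum, Fintype.sum_prod_type]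
  -- Sorting the eight summation variables by type, keeping their order within each type,
  -- brings both sides to the same order of summation.
  simp only [Finset.sum_comm (γ := α) (α := β), Finset.sum_comm (γ := γ) (α := β),
    Finset.sum_comm (γ := δ) (α := β), Finset.sum_comm (γ := α) (α := δ),
    Finset.sum_comm (γ := γ) (α := δ), Finset.sum_comm (γ := γ) (α := α)]
  ac_rfl

end Realignment

theorem trace_mul_eq_sum_trace_submatrix_mul {m n R : Type*} [Fintype m] [Fintype n]
    [NonUnitalNonAssocSemiring R] (C C' : Matrix (m × n) (m × n) R) :
    trace (C * C') = ∑ e, ∑ f, trace (C.submatrix (·, e) (·, f) * C'.submatrix (·, f) (·, e)) := by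
  simp only [trace, diag, mul_apply, submatrix_apply, Fintype.sum_prod_type]
  simp only [Finset.sum_comm (γ := m) (α := n)]

theorem SAA_mul_mul_SAA {dA dB : ℕ}
    (M : Matrix ((Fin dA × Fin dB) × (Fin dA × Fin dB)) ((Fin dA × Fin dB) × (Fin dA × Fin dB)) ℂ) :
    SAA dA dB * M * SAA dA dB = M.submatrix swapFst swapFst := by
  ext p q
  simp [SAA, mul_apply, swapFst, ite_and, Fintype.sum_prod_type]

theorem trace_swapOp_mul_kronecker {d : ℕ} (X Y : Matrix (Fin d) (Fin d) ℂ) :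
    trace (swapOp d * (X ⊗ₖ Y)) = trace (X * Y) := by
  simp only [trace, swapOp, ite_and, diag_apply, mul_apply, of_apply, kroneckerMap_apply, ite_mul,
    one_mul, zero_mul, Fintype.sum_prod_type, Finset.sum_ite_eq, Finset.mem_univ, ↓reduceIte]
  exact Finset.sum_comm

theorem tensorOp_swapOp {d : ℕ} (Φ Ψ : Matrix (Fin d) (Fin d) ℂ → Matrix (Fin d) (Fin d) ℂ) :
    tensorOp d Φ Ψ (swapOp d) = ∑ e, ∑ f, Φ (single e f 1) ⊗ₖ Ψ (single f e 1) := by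
  ext p q
  simp only [tensorOp, swapOp, ite_and, of_apply, mul_ite, mul_one, mul_zero, Finset.sum_ite_eq,
    Finset.mem_univ, ↓reduceIte, Finset.sum_ite_eq', Matrix.sum_apply, kroneckerMap_apply]

theorem trace_swapOp_mul_tensorOp_swapOp {d : ℕ}
    (Φ Ψ : Matrix (Fin d) (Fin d) ℂ → Matrix (Fin d) (Fin d) ℂ) :
    trace (swapOp d * tensorOp d Φ Ψ (swapOp d)) =
      ∑ e, ∑ f, trace (Φ (single e f 1) * Ψ (single f e 1)) := by
  simp only [tensorOp_swapOp, Matrix.mul_sum, trace_sum, trace_swapOp_mul_kronecker]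

theorem redDyn_single {dA dB : ℕ} (U : Matrix (Fin dA × Fin dB) (Fin dA × Fin dB) ℂ)
    (e f : Fin dA) :
    redDyn dA dB U (single e f 1) =
      (dB : ℂ)⁻¹ • (realign U * (realign U)ᴴ).submatrix (·, e) (·, f) := by
  ext a c
  simp only [redDyn, mul_apply, kroneckerMap_apply, single_apply, ite_and, Matrix.smul_apply,
    one_apply, smul_eq_mul, mul_ite, mul_one, mul_zero, ite_mul, one_mul, zero_mul,
    Fintype.sum_prod_type, Finset.sum_ite_eq', Finset.mem_univ, ↓reduceIte, Finset.sum_ite_eq,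
    conjTranspose_apply, Finset.sum_ite_irrel, Finset.sum_const_zero, of_apply, realign,
    submatrix_apply, Finset.mul_sum]
  refine Finset.sum_congr rfl fun _ _ => Finset.sum_congr rfl fun _ _ => by ring

theorem trace_swapOp_mul_tensorOp_redDyn_swapOp {dA dB : ℕ}
    (U : Matrix (Fin dA × Fin dB) (Fin dA × Fin dB) ℂ) :
    trace (swapOp dA * tensorOp dA (redDyn dA dB U) (redDyn dA dB U) (swapOp dA)) =
      (dB : ℂ)⁻¹ ^ 2 * trace (realign U * (realign U)ᴴ * (realign U * (realign U)ᴴ)) := by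
  rw [trace_swapOp_mul_tensorOp_swapOp, trace_mul_eq_sum_trace_submatrix_mul, Finset.mul_sum]
  simp only [redDyn_single, smul_mul_smul_comm, trace_smul, Finset.mul_sum, smul_eq_mul, sq]

theorem otoc_reduced_dynamics_general (dA dB : ℕ)
    (U : Matrix (Fin dA × Fin dB) (Fin dA × Fin dB) ℂ) :
    Greal dA dB U = 1 - (1 / (dA : ℝ)^2) *
      (Matrix.trace (swapOp dA *
        tensorOp dA (redDyn dA dB U) (redDyn dA dB U) (swapOp dA))).re := by
  rw [Greal, SAA_mul_mul_SAA, trace_kronecker_submatrix_swapFst_mul,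
    trace_swapOp_mul_tensorOp_redDyn_swapOp]
  have hcast : (dB : ℂ)⁻¹ ^ 2 = (((dB : ℝ)⁻¹ ^ 2 : ℝ) : ℂ) := by push_cast; rfl
  rw [hcast, Complex.re_ofReal_mul]
  ring

/-- The bipartite OTOC in terms of the reduced dynamics:
`G_U = 1 − (1/d_A²) Tr[S_{AA'} (Λ ⊗ Λ)(S_{AA'})]`. -/
theorem otoc_reduced_dynamics (dA dB : ℕ) (hA : 0 < dA) (hB : 0 < dB)
    (U : Matrix (Fin dA × Fin dB) (Fin dA × Fin dB) ℂ)
    (hU : U ∈ Matrix.unitaryGroup (Fin dA × Fin dB) ℂ) :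
    Greal dA dB U = 1 - (1 / (dA : ℝ)^2) *
      (Matrix.trace (swapOp dA *
        tensorOp dA (redDyn dA dB U) (redDyn dA dB U) (swapOp dA))).re :=
  otoc_reduced_dynamics_general dA dB U
end
end

section
/- If all eigenstates |φ_k⟩ of a Hamiltonian on ℂ^{√d} ⊗ ℂ^{√d} are maximally entangled with respect to the bipartition (i.e., ρ_k^{(A)} = I/√d for all k) and the Hamiltonian satisfies NRC, then the time-averaged bipartite OTOC equals (1 − 1/d)². -/
open Matrix Kronecker BigOperators

noncomputable section

/-- Reduced density matrix on `A` of a pure state on `ℂ^{d_A} ⊗ ℂ^{d_B}`. -/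
def rhoA (dA dB : ℕ) (ψ : Fin dA × Fin dB → ℂ) : Matrix (Fin dA) (Fin dA) ℂ :=
  Matrix.of fun a c => ∑ b : Fin dB, ψ (a, b) * star (ψ (c, b))

/-- Reduced density matrix on `B` of a pure state on `ℂ^{d_A} ⊗ ℂ^{d_B}`. -/
def rhoB (dA dB : ℕ) (ψ : Fin dA × Fin dB → ℂ) : Matrix (Fin dB) (Fin dB) ℂ :=
  Matrix.of fun b b' => ∑ a : Fin dA, ψ (a, b) * star (ψ (a, b'))

/-- The Hamiltonian `H = Σ_k E_k |φ_k⟩⟨φ_k|`. -/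
def hamOf (dA dB : ℕ) (E : Fin (dA * dB) → ℝ) (φ : Fin (dA * dB) → Fin dA × Fin dB → ℂ) :
    Matrix (Fin dA × Fin dB) (Fin dA × Fin dB) ℂ :=
  ∑ k, (E k : ℂ) • Matrix.vecMulVec (φ k) (star (φ k))

/-- The time evolution `U_t = exp(−iHt)`. -/
def evolOf (dA dB : ℕ) (E : Fin (dA * dB) → ℝ) (φ : Fin (dA * dB) → Fin dA × Fin dB → ℂ)
    (t : ℝ) : Matrix (Fin dA × Fin dB) (Fin dA × Fin dB) ℂ :=
  NormedSpace.exp ((-(t : ℂ) * Complex.I) • hamOf dA dB E φ)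

/-! Expanding `U_t = Σ_k e^{-iE_k t} |φ_k⟩⟨φ_k|` and writing `P = (k, l)`, `ε_P = E_k + E_l`,
the OTOC becomes `1 − d⁻² Σ_{P,Q} |⟨φ_Q| S_{AA'} |φ_P⟩|² cos((ε_Q − ε_P) t)`. The time average
keeps only the resonant pairs `ε_P = ε_Q`, which by NRC are `Q = P` and `Q = P.swap`. Their
amplitudes are `Tr(ρ_k^A ρ_l^A)` and `Tr(ρ_k^B ρ_l^B)`, both equal to `1/√d` for maximally
entangled eigenstates, and there are `2d² − d` of them, so the average is
`1 − (2d² − d)/d³ = (1 − 1/d)²`. -/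

open Filter Topology

section Spectral

variable {ι κ : Type*} [Fintype ι] [Fintype κ] [DecidableEq κ]

lemma mul_diagonal_mul_conjTranspose_eq_sum (e : κ ≃ ι) (φ : ι → κ → ℂ) (v : ι → ℂ) :
    of (fun x j => φ (e j) x) * diagonal (v ∘ e) * (of fun x j => φ (e j) x)ᴴ
      = ∑ k, v k • vecMulVec (φ k) (star (φ k)) := by
  ext x y
  rw [mul_apply, Matrix.sum_apply, ← e.sum_comp]
  simp only [mul_diagonal, conjTranspose_apply, of_apply, Matrix.smul_apply, vecMulVec_apply,
    smul_eq_mul, Pi.star_apply, Function.comp_apply]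
  exact Finset.sum_congr rfl fun j _ => by ring

lemma exp_sum_smul_vecMulVec [DecidableEq ι] (e : κ ≃ ι) (φ : ι → κ → ℂ)
    (hφ : ∀ k l, (∑ x, star (φ k x) * φ l x) = if k = l then 1 else 0) (v : ι → ℂ) :
    NormedSpace.exp (∑ k, v k • vecMulVec (φ k) (star (φ k)))
      = ∑ k, Complex.exp (v k) • vecMulVec (φ k) (star (φ k)) := by
  set W : Matrix κ κ ℂ := of fun x j => φ (e j) x
  have hWW : Wᴴ * W = 1 := by
    ext j j'
    simp only [W, mul_apply, conjTranspose_apply, of_apply, one_apply, hφ, e.apply_eq_iff_eq]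
  let Wu : (Matrix κ κ ℂ)ˣ := ⟨W, Wᴴ, mul_eq_one_comm.mp hWW, hWW⟩
  rw [← mul_diagonal_mul_conjTranspose_eq_sum e φ, ← mul_diagonal_mul_conjTranspose_eq_sum e φ,
    show W * diagonal (v ∘ e) * Wᴴ = Wu * diagonal (v ∘ e) * ↑Wu⁻¹ from rfl,
    Matrix.exp_units_conj, Matrix.exp_diagonal, Pi.exp_def]
  simp_rw [← Complex.exp_eq_exp_ℂ]
  rfl

end Spectral

lemma evolOf_eq_sum {dA dB : ℕ} (E : Fin (dA * dB) → ℝ) (φ : Fin (dA * dB) → Fin dA × Fin dB → ℂ)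
    (hφ : ∀ k l, (∑ x, star (φ k x) * φ l x) = if k = l then 1 else 0) (t : ℝ) :
    evolOf dA dB E φ t
      = ∑ k, Complex.exp (-(t * E k) * Complex.I) • vecMulVec (φ k) (star (φ k)) := by
  rw [evolOf, hamOf, Finset.smul_sum]
  simp_rw [smul_smul]
  rw [exp_sum_smul_vecMulVec finProdFinEquiv φ hφ]
  congr! 3
  ring

section Trace

variable {m J : Type*} [Fintype m] [Fintype J]

lemma trace_mul_vecMulVec_mul_mul_vecMulVec {R : Type*} [CommSemiring R] (S : Matrix m m R)
    (u a w b : m → R) :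
    trace (S * vecMulVec u a * S * vecMulVec w b) = (b ⬝ᵥ S *ᵥ u) * (a ⬝ᵥ S *ᵥ w) := by
  rw [Matrix.mul_assoc, mul_vecMulVec, mul_vecMulVec, vecMulVec_mul_vecMulVec, trace_vecMulVec,
    dotProduct_smul, smul_eq_mul, dotProduct_comm (S *ᵥ u), mul_comm]

lemma trace_mul_mul_mul_conjTranspose {S A : Matrix m m ℂ} (hS : Sᴴ = S) {a : J → ℂ}
    {u : J → m → ℂ} (hA : A = ∑ j, a j • vecMulVec (u j) (star (u j))) :
    trace (S * A * S * Aᴴ)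
      = ∑ i, ∑ j, a i * star (a j) * Complex.normSq (star (u j) ⬝ᵥ S *ᵥ u i) := by
  have hamp : ∀ i j, (star (u j) ⬝ᵥ S *ᵥ u i) * (star (u i) ⬝ᵥ S *ᵥ u j)
      = Complex.normSq (star (u j) ⬝ᵥ S *ᵥ u i) := by
    intro i j
    rw [star_dotProduct (u i), star_mulVec, ← dotProduct_mulVec, hS, ← Complex.mul_conj]
    rfl
  simp only [hA, conjTranspose_sum, conjTranspose_smul, conjTranspose_vecMulVec, star_star,
    Matrix.sum_mul, Matrix.mul_smul, Matrix.smul_mul, trace_sum, trace_smul,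
    trace_mul_vecMulVec_mul_mul_vecMulVec, hamp, smul_eq_mul, Finset.mul_sum]
  rw [Finset.sum_comm]
  refine Finset.sum_congr rfl fun i _ => Finset.sum_congr rfl fun j _ => ?_
  ring

end Trace

def tensorVec {α β : Type*} (u : α → ℂ) (w : β → ℂ) : α × β → ℂ := fun p => u p.1 * w p.2

lemma star_tensorVec {α β : Type*} (u : α → ℂ) (w : β → ℂ) :
    star (tensorVec u w) = tensorVec (star u) (star w) := by
  ext p
  simp [tensorVec]

def swapAmp {ι : Type*} {dA dB : ℕ} (φ : ι → Fin dA × Fin dB → ℂ) (P Q : ι × ι) : ℂ :=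
  star (tensorVec (φ Q.1) (φ Q.2)) ⬝ᵥ SAA dA dB *ᵥ tensorVec (φ P.1) (φ P.2)

section Swap

variable {dA dB : ℕ}

lemma sum_smul_vecMulVec_kronecker {ι κ₁ κ₂ : Type*} [Fintype ι] (a b : ι → ℂ) (u : ι → κ₁ → ℂ)
    (w : ι → κ₂ → ℂ) :
    (∑ k, a k • vecMulVec (u k) (star (u k))) ⊗ₖ (∑ l, b l • vecMulVec (w l) (star (w l)))
      = ∑ P : ι × ι, (a P.1 * b P.2) •
          vecMulVec (tensorVec (u P.1) (w P.2)) (star (tensorVec (u P.1) (w P.2))) := by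
  ext x y
  simp only [kroneckerMap_apply, Matrix.sum_apply, Matrix.smul_apply, vecMulVec_apply,
    star_tensorVec, tensorVec, Pi.star_apply, smul_eq_mul, Finset.sum_mul_sum,
    ← Fintype.sum_prod_type']
  exact Finset.sum_congr rfl fun P _ => by ring

lemma SAA_mulVec (v : (Fin dA × Fin dB) × (Fin dA × Fin dB) → ℂ) (p) :
    (SAA dA dB *ᵥ v) p = v ((p.2.1, p.1.2), (p.1.1, p.2.2)) := by
  rw [mulVec, dotProduct, Finset.sum_eq_single ((p.2.1, p.1.2), (p.1.1, p.2.2))]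
  · simp [SAA]
  · intro q _ hq
    rw [SAA, of_apply, if_neg, zero_mul]
    rintro ⟨h1, h2, h3, h4⟩
    exact hq (by ext <;> simp [*])
  · simp

lemma conjTranspose_SAA : (SAA dA dB)ᴴ = SAA dA dB := by
  ext p q
  simp only [SAA, conjTranspose_apply, of_apply]
  split_ifs <;> simp_all

lemma swapAmp_self {ι : Type*} (φ : ι → Fin dA × Fin dB → ℂ) (P : ι × ι) :
    swapAmp φ P P = trace (rhoA dA dB (φ P.1) * rhoA dA dB (φ P.2)) := by
  simp only [swapAmp, dotProduct, SAA_mulVec, tensorVec, Pi.star_apply, trace, diag,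
    mul_apply, rhoA, of_apply, Finset.sum_mul_sum, Fintype.sum_prod_type]
  conv_rhs => rw [Finset.sum_comm]
  refine Finset.sum_congr rfl fun a _ => ?_
  rw [Finset.sum_comm]
  refine Finset.sum_congr rfl fun a' _ => Finset.sum_congr rfl fun b _ =>
    Finset.sum_congr rfl fun b' _ => ?_
  rw [star_mul']
  ring

lemma swapAmp_swap {ι : Type*} (φ : ι → Fin dA × Fin dB → ℂ) (P : ι × ι) :
    swapAmp φ P P.swap = trace (rhoB dA dB (φ P.1) * rhoB dA dB (φ P.2)) := by
  simp only [swapAmp, Prod.fst_swap, Prod.snd_swap, dotProduct, SAA_mulVec, tensorVec,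
    Pi.star_apply, trace, diag, mul_apply, rhoB, of_apply, Finset.sum_mul_sum,
    Fintype.sum_prod_type]
  rw [Finset.sum_comm]
  refine Finset.sum_congr rfl fun b _ => ?_
  conv_rhs => rw [Finset.sum_comm]
  rw [Finset.sum_comm]
  refine Finset.sum_congr rfl fun a _ => ?_
  rw [Finset.sum_comm]
  refine Finset.sum_congr rfl fun b' _ => Finset.sum_congr rfl fun a' _ => ?_
  rw [star_mul']
  ring

end Swap

lemma conjTranspose_mul_self_eq_smul_one {K n : Type*} [Field K] [StarRing K] [Fintype n]
    [DecidableEq n] {M : Matrix n n K} {c : K} (hc : c ≠ 0) (h : M * Mᴴ = c • 1) :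
    Mᴴ * M = c • 1 := by
  have hinv : M * (c⁻¹ • Mᴴ) = 1 := by
    rw [Matrix.mul_smul, h, smul_smul, inv_mul_cancel₀ hc, one_smul]
  have := mul_eq_one_comm.mp hinv
  rwa [Matrix.smul_mul, inv_smul_eq_iff₀ hc] at this

lemma rhoA_eq_mul_conjTranspose {dA dB : ℕ} (ψ : Fin dA × Fin dB → ℂ) :
    rhoA dA dB ψ = of (fun a b => ψ (a, b)) * (of fun a b => ψ (a, b))ᴴ := by
  ext a c
  simp [rhoA, mul_apply]

lemma rhoB_eq_transpose_conjTranspose_mul {dA dB : ℕ} (ψ : Fin dA × Fin dB → ℂ) :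
    rhoB dA dB ψ = ((of fun a b => ψ (a, b))ᴴ * of (fun a b => ψ (a, b)))ᵀ := by
  ext b b'
  simp [rhoB, mul_apply, mul_comm]

lemma rhoB_eq_smul_one_of_rhoA_eq_smul_one {n : ℕ} {ψ : Fin n × Fin n → ℂ} {c : ℂ} (hc : c ≠ 0)
    (h : rhoA n n ψ = c • 1) : rhoB n n ψ = c • 1 := by
  rw [rhoA_eq_mul_conjTranspose] at h
  rw [rhoB_eq_transpose_conjTranspose_mul, conjTranspose_mul_self_eq_smul_one hc h,
    transpose_smul, transpose_one]

lemma trace_inv_smul_one_mul_inv_smul_one (n : ℕ) :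
    trace (((n : ℂ)⁻¹ • 1 : Matrix (Fin n) (Fin n) ℂ) * (n : ℂ)⁻¹ • 1) = (n : ℂ)⁻¹ := by
  rw [smul_mul_smul_comm, Matrix.one_mul, trace_smul, trace_one, Fintype.card_fin, smul_eq_mul]
  simpa only [inv_inv] using mul_self_mul_inv (n : ℂ)⁻¹

section TimeAverage

open Real

lemma tendsto_average_cos (ω : ℝ) :
    Tendsto (fun T => (1 / T) * ∫ t in (0 : ℝ)..T, cos (ω * t)) atTop
      (𝓝 (if ω = 0 then 1 else 0)) := by
  by_cases hω : ω = 0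
  · subst hω
    refine tendsto_const_nhds.congr' ?_
    filter_upwards [eventually_ne_atTop 0] with T hT
    simp [hT]
  · have hint : ∀ T, ∫ t in (0 : ℝ)..T, cos (ω * t) = sin (ω * T) / ω := fun T => by
      rw [eq_div_iff hω, mul_comm, intervalIntegral.mul_integral_comp_mul_left, integral_cos,
        mul_zero, sin_zero, sub_zero]
    simp only [hω, if_false, hint, one_div]
    refine tendsto_inv_atTop_zero.zero_mul_isBoundedUnder_le
      (isBoundedUnder_of ⟨|ω|⁻¹, fun T => ?_⟩)
    simp only [Function.comp_apply, Real.norm_eq_abs, abs_div]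
    exact div_le_div_of_nonneg_right (abs_sin_le_one _) (abs_nonneg _) |>.trans_eq (one_div _)

lemma tendsto_average_sum_mul_cos {J : Type*} [Fintype J] (w ω : J → ℝ) :
    Tendsto (fun T => (1 / T) * ∫ t in (0 : ℝ)..T, ∑ j, w j * cos (ω j * t)) atTop
      (𝓝 (∑ j, if ω j = 0 then w j else 0)) := by
  have hcont : ∀ j, Continuous fun t => w j * cos (ω j * t) := by fun_prop
  simp_rw [intervalIntegral.integral_finsetSum fun j _ => (hcont j).intervalIntegrable 0 _,
    intervalIntegral.integral_const_mul, Finset.mul_sum, mul_left_comm (1 / _ : ℝ)]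
  refine tendsto_finsetSum _ fun j _ => ?_
  simpa only [mul_ite, mul_one, mul_zero] using (tendsto_average_cos (ω j)).const_mul (w j)

lemma tendsto_average_const_sub {f : ℝ → ℝ} (hf : Continuous f) (a : ℝ) {L : ℝ}
    (h : Tendsto (fun T => (1 / T) * ∫ t in (0 : ℝ)..T, f t) atTop (𝓝 L)) :
    Tendsto (fun T => (1 / T) * ∫ t in (0 : ℝ)..T, (a - f t)) atTop (𝓝 (a - L)) := by
  refine (h.const_sub a).congr' ?_
  filter_upwards [eventually_ne_atTop 0] with T hT
  rw [intervalIntegral.integral_sub intervalIntegrable_const (hf.intervalIntegrable 0 T),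
    intervalIntegral.integral_const, smul_eq_mul, sub_zero, mul_sub, ← mul_assoc,
    one_div_mul_cancel hT, one_mul]

end TimeAverage

lemma Greal_evolOf {dA dB : ℕ} (E : Fin (dA * dB) → ℝ)
    (φ : Fin (dA * dB) → Fin dA × Fin dB → ℂ)
    (hφ : ∀ k l, (∑ x, star (φ k x) * φ l x) = if k = l then 1 else 0) (t : ℝ) :
    Greal dA dB (evolOf dA dB E φ t)
      = 1 - ∑ x : (Fin (dA * dB) × Fin (dA * dB)) × (Fin (dA * dB) × Fin (dA * dB)),
          Complex.normSq (swapAmp φ x.1 x.2) / (dA * dB : ℝ) ^ 2 *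
            Real.cos ((E x.2.1 + E x.2.2 - (E x.1.1 + E x.1.2)) * t) := by
  have hphase : ∀ a b c d : ℝ,
      Complex.exp (-(t * a) * Complex.I) * Complex.exp (-(t * b) * Complex.I) *
        star (Complex.exp (-(t * c) * Complex.I) * Complex.exp (-(t * d) * Complex.I))
        = Complex.exp (((c + d - (a + b)) * t : ℝ) * Complex.I) := by
    intro a b c d
    rw [Complex.star_def, map_mul, ← Complex.exp_conj, ← Complex.exp_conj, ← Complex.exp_add,
      ← Complex.exp_add, ← Complex.exp_add]
    congr 1
    simp only [map_mul, map_neg, Complex.conj_ofReal, Complex.conj_I]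
    push_cast
    ring
  rw [Greal, ← conjTranspose_kronecker, trace_mul_mul_mul_conjTranspose conjTranspose_SAA
    (by rw [evolOf_eq_sum E φ hφ t, sum_smul_vecMulVec_kronecker]), ← Fintype.sum_prod_type',
    Complex.re_sum]
  simp only [hphase, Complex.re_mul_ofReal, Complex.exp_ofReal_mul_I_re, swapAmp,
    Finset.mul_sum, one_div]
  refine congrArg _ (Finset.sum_congr rfl fun x _ => ?_)
  ring

lemma sum_ite_eq_or_eq_swap {ι : Type*} [Fintype ι] [DecidableEq ι] (v : ℝ) :
    ∑ x : (ι × ι) × (ι × ι), (if x.2 = x.1 ∨ x.2 = x.1.swap then v else 0)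
      = (2 * Fintype.card ι ^ 2 - Fintype.card ι) * v := by
  have hpair : ∀ P : ι × ι, ∑ Q, (if Q = P ∨ Q = P.swap then v else 0)
      = 2 * v - if P.1 = P.2 then v else 0 := by
    intro P
    have hmem : ∀ Q, (Q = P ∨ Q = P.swap) ↔ Q ∈ ({P, P.swap} : Finset (ι × ι)) := by simp
    simp only [hmem, Finset.sum_ite_mem, Finset.univ_inter, Finset.sum_const, nsmul_eq_mul]
    by_cases h : P.1 = P.2
    · have hP : P.swap = P := Prod.ext h.symm h
      simp only [hP, Finset.pair_eq_singleton, Finset.card_singleton, h, if_true]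
      ring
    · have hP : P ≠ P.swap := fun hP => h (congrArg Prod.fst hP)
      rw [Finset.card_pair hP, if_neg h]
      norm_num
  have hdiag : ∑ P : ι × ι, (if P.1 = P.2 then v else 0) = Fintype.card ι * v := by
    simp [Fintype.sum_prod_type]
  rw [Fintype.sum_prod_type]
  simp only [hpair, Finset.sum_sub_distrib, hdiag, Finset.sum_const, Finset.card_univ,
    Fintype.card_prod, nsmul_eq_mul]
  push_cast
  ring

lemma sub_eq_zero_iff_eq_or_eq_swap {ι : Type*} {E : ι → ℝ}
    (hNRC : ∀ k l m n', E k + E l = E m + E n' → (k = m ∧ l = n') ∨ (k = n' ∧ l = m))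
    (P Q : ι × ι) : E Q.1 + E Q.2 - (E P.1 + E P.2) = 0 ↔ Q = P ∨ Q = P.swap := by
  obtain ⟨k, l⟩ := P
  obtain ⟨m, m'⟩ := Q
  simp only [Prod.swap_prod_mk, Prod.mk.injEq]
  constructor
  · intro h
    rcases hNRC k l m m' (by linarith) with ⟨rfl, rfl⟩ | ⟨rfl, rfl⟩ <;> simp
  · rintro (⟨rfl, rfl⟩ | ⟨rfl, rfl⟩) <;> ring

/-- If all eigenstates of an NRC Hamiltonian on `ℂ^{√d} ⊗ ℂ^{√d}` are maximally
entangled, the time-averaged bipartite OTOC equals `(1 − 1/d)²`. -/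
theorem otoc_time_average_max_entangled (n : ℕ) (hn : 0 < n)
    (E : Fin (n * n) → ℝ) (φ : Fin (n * n) → Fin n × Fin n → ℂ)
    (hortho : ∀ k l, (∑ x, star (φ k x) * φ l x) = if k = l then 1 else 0)
    (hNRC : ∀ k l m n', E k + E l = E m + E n' → (k = m ∧ l = n') ∨ (k = n' ∧ l = m))
    (hME : ∀ k, rhoA n n (φ k) = ((n : ℂ))⁻¹ • (1 : Matrix (Fin n) (Fin n) ℂ)) :
    Filter.Tendsto
      (fun T : ℝ => (1 / T) * ∫ t in (0 : ℝ)..T, Greal n n (evolOf n n E φ t))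
      Filter.atTop
      (nhds ((1 - 1 / ((n * n : ℝ)))^2)) := by
  have hinv : (n : ℂ)⁻¹ ≠ 0 := by simpa using hn.ne'
  have hamp : ∀ P Q, Q = P ∨ Q = P.swap → swapAmp φ P Q = (n : ℂ)⁻¹ := by
    rintro P Q (rfl | rfl)
    · rw [swapAmp_self, hME, hME, trace_inv_smul_one_mul_inv_smul_one]
    · rw [swapAmp_swap, rhoB_eq_smul_one_of_rhoA_eq_smul_one hinv (hME _),
        rhoB_eq_smul_one_of_rhoA_eq_smul_one hinv (hME _), trace_inv_smul_one_mul_inv_smul_one]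
  have hres : ∀ x : (Fin (n * n) × Fin (n * n)) × (Fin (n * n) × Fin (n * n)),
      (if E x.2.1 + E x.2.2 - (E x.1.1 + E x.1.2) = 0 then
        Complex.normSq (swapAmp φ x.1 x.2) / (n * n : ℝ) ^ 2 else 0)
        = if x.2 = x.1 ∨ x.2 = x.1.swap then
            Complex.normSq (n : ℂ)⁻¹ / (n * n : ℝ) ^ 2 else 0 := by
    rintro ⟨P, Q⟩
    rw [if_congr (sub_eq_zero_iff_eq_or_eq_swap hNRC P Q) rfl rfl]
    split_ifs with h
    · rw [hamp P Q h]
    · rfl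
  simp_rw [Greal_evolOf E φ hortho]
  convert tendsto_average_const_sub ?_ 1 (tendsto_average_sum_mul_cos _ _) using 2
  · have hnR : (n : ℝ) ≠ 0 := by exact_mod_cast hn.ne'
    rw [Finset.sum_congr rfl fun x _ => hres x, sum_ite_eq_or_eq_swap, Fintype.card_fin, map_inv₀,
      Complex.normSq_natCast]
    push_cast
    field_simp
    ring
  · fun_prop
end
end
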